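/- Let H be a separable complex Hilbert space, M a linear operator with domain D(M) ⊆ H, and (L_k) a countable family of linear maps L_k : D(M) → H satisfying Σ_k ‖L_k φ‖² = 2 Re⟨φ, Mφ⟩ for all φ ∈ D(M). Define on matrix units the superoperators M(|φ⟩⟨ψ|) := |Mφ⟩⟨ψ| + |φ⟩⟨Mψ| and L_+(|φ⟩⟨ψ|) := Σ_k |L_kφ⟩⟨L_kψ|. Let ε > 0 and let (φ, ψ) and (e, f) be pairs in D(M) with ‖φ−e‖ ≤ ε, ‖Mφ−Me‖ ≤ ε, ‖ψ−f‖ ≤ ε, ‖Mψ−Mf‖ ≤ ε. Then both ‖M(|φ⟩⟨ψ|) − M(|e⟩⟨f|)‖₁ and ‖L_+(|φ⟩⟨ψ|) − L_+(|e⟩⟨f|)‖₁ are at most ε·(‖φ‖ + ‖Mφ‖ + ‖ψ‖ + ‖Mψ‖ + 2ε). -/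

import Mathlib

open Filter Set
open scoped InnerProductSpace ComplexConjugate ComplexOrder Topology ComplexInnerProductSpace

noncomputable section

variable {H T : Type*}

/-- An abstract model of the Banach space `𝔗(H)` of trace-class operators on the Hilbert
space `H`, equipped with the trace norm `‖·‖₁`: a Banach space `T` acting injectively as
bounded operators on `H`, containing all rank-one operators `|x⟩⟨y|` (with
`‖ |x⟩⟨y| ‖₁ = ‖x‖·‖y‖`, their span being dense), together with the trace functional. -/
structure TraceClassModel (H T : Type*) [NormedAddCommGroup H] [InnerProductSpace ℂ H]
    [NormedAddCommGroup T] [NormedSpace ℂ T] where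
  /-- a trace-class operator acts as a bounded operator on `H` -/
  toCLM : T →ₗ[ℂ] (H →L[ℂ] H)
  toCLM_injective : Function.Injective toCLM
  /-- the rank-one operator `|x⟩⟨y| : z ↦ ⟪y, z⟫ • x` as a trace-class operator -/
  rankOne : H → H → T
  toCLM_rankOne : ∀ x y z : H, toCLM (rankOne x y) z = ⟪y, z⟫_ℂ • x
  norm_rankOne : ∀ x y : H, ‖rankOne x y‖ = ‖x‖ * ‖y‖
  dense_span_rankOne :
    Dense ((Submodule.span ℂ (Set.range fun p : H × H => rankOne p.1 p.2) : Submodule ℂ T) : Set T)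
  /-- the trace, a continuous linear functional for the trace norm -/
  trace : T →L[ℂ] ℂ
  trace_rankOne : ∀ x y : H, trace (rankOne x y) = ⟪y, x⟫_ℂ

variable [NormedAddCommGroup H] [InnerProductSpace ℂ H] [CompleteSpace H]
  [NormedAddCommGroup T] [NormedSpace ℂ T] [CompleteSpace T]

/-- The standard criterion for complete positivity of a map on trace-class operators:
`∑_{k,ℓ} ⟪ψ_k, P(|φ_k⟩⟨φ_ℓ|) ψ_ℓ⟫ ≥ 0` for all finite families of vectors. -/
def TraceClassModel.IsCPMap (Mod : TraceClassModel H T) (P : T → T) : Prop :=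
  ∀ (N : ℕ) (φ ψ : Fin N → H),
    0 ≤ ∑ k, ∑ l, ⟪ψ k, Mod.toCLM (P (Mod.rankOne (φ k) (φ l))) (ψ l)⟫_ℂ

/-- A quantum dynamical semigroup: a strongly continuous semigroup of trace-preserving
completely positive linear maps on the trace class. -/
structure QDS {H T : Type*} [NormedAddCommGroup H] [InnerProductSpace ℂ H]
    [NormedAddCommGroup T] [NormedSpace ℂ T] (Mod : TraceClassModel H T) where
  map : ℝ → T →L[ℂ] T
  map_zero : map 0 = ContinuousLinearMap.id ℂ T
  map_add : ∀ s t : ℝ, 0 ≤ s → 0 ≤ t → map (s + t) = (map s).comp (map t)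
  strong_continuity : ∀ ρ : T, ContinuousOn (fun t : ℝ => map t ρ) (Ici 0)
  trace_preserving : ∀ t : ℝ, 0 ≤ t → ∀ ρ : T, Mod.trace (map t ρ) = Mod.trace ρ
  completely_positive : ∀ t : ℝ, 0 ≤ t → Mod.IsCPMap (map t)

variable {Mod : TraceClassModel H T}

/-- `σ = lim_{t→0+} (T^t ρ - ρ)/t` in trace norm. -/
def QDS.HasGenDerivAt (S : QDS Mod) (ρ σ : T) : Prop :=
  Tendsto (fun t : ℝ => (t : ℂ)⁻¹ • (S.map t ρ - ρ)) (𝓝[>] 0) (𝓝 σ)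

/-- The generator of a QDS: the function `L` defined on its maximal domain `Dom`,
consisting of all `ρ` for which `(T^t ρ - ρ)/t` converges in trace norm as `t → 0+`. -/
structure QDS.Generator {H T : Type*} [NormedAddCommGroup H] [InnerProductSpace ℂ H]
    [NormedAddCommGroup T] [NormedSpace ℂ T] {Mod : TraceClassModel H T} (S : QDS Mod) where
  Dom : Set T
  L : T → T
  mem_dom_iff : ∀ ρ : T, ρ ∈ Dom ↔ ∃ σ, S.HasGenDerivAt ρ σ
  hasGenDerivAt : ∀ ρ ∈ Dom, S.HasGenDerivAt ρ (L ρ)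

/-- `D` is a core for the operator `L` with domain `Dom`: `D ⊆ Dom` and `D` is dense in
`Dom` with respect to the graph norm `‖ρ‖ + ‖L ρ‖`. -/
def IsCoreFor {E : Type*} [NormedAddCommGroup E] (L : E → E) (Dom D : Set E) : Prop :=
  D ⊆ Dom ∧ ∀ ρ ∈ Dom, ∀ ε : ℝ, 0 < ε → ∃ σ ∈ D, ‖ρ - σ‖ + ‖L ρ - L σ‖ < ε

/-- `e` is an orthonormal basis of `H`. -/
def IsONBasis {ι : Type*} (e : ι → H) : Prop :=
  Orthonormal ℂ e ∧ Dense ((Submodule.span ℂ (Set.range e) : Submodule ℂ H) : Set H)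

/-- `D_e²`: the linear span of the matrix units `|e_k⟩⟨e_ℓ|` of the basis `e`. -/
def TraceClassModel.De2 (Mod : TraceClassModel H T) {ι : Type*} (e : ι → H) : Set T :=
  (Submodule.span ℂ (Set.range fun p : ι × ι => Mod.rankOne (e p.1) (e p.2)) : Submodule ℂ T)

/-- The QDS is matrix normal with respect to the orthonormal basis `e`:
`D_e²` is a core for the generator. -/
def QDS.Generator.MatrixNormal {S : QDS Mod} (G : S.Generator) {ι : Type*} (e : ι → H) : Prop :=
  IsONBasis e ∧ IsCoreFor G.L G.Dom (Mod.De2 e)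

/-- `M` (a densely defined unbounded operator on `H`) generates a strongly continuous
contraction semigroup `C t = e^{-tM}` on `H`, whose generator `-M` has domain exactly
`M.domain`. -/
def GeneratesContractionSemigroupPMap (M : H →ₗ.[ℂ] H) : Prop :=
  ∃ C : ℝ → H →L[ℂ] H,
    C 0 = ContinuousLinearMap.id ℂ H ∧
    (∀ s t : ℝ, 0 ≤ s → 0 ≤ t → C (s + t) = (C s).comp (C t)) ∧
    (∀ t : ℝ, 0 ≤ t → ‖C t‖ ≤ 1) ∧
    (∀ ψ : H, ContinuousOn (fun t : ℝ => C t ψ) (Ici 0)) ∧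
    (∀ ψ : H, ψ ∈ M.domain ↔
      ∃ η, Tendsto (fun t : ℝ => (t : ℂ)⁻¹ • (C t ψ - ψ)) (𝓝[>] 0) (𝓝 η)) ∧
    (∀ φ : M.domain,
      Tendsto (fun t : ℝ => (t : ℂ)⁻¹ • (C t (φ : H) - (φ : H))) (𝓝[>] 0) (𝓝 (-(M φ))))

/-- `Mf : H → H`, restricted to `D`, generates a strongly continuous contraction semigroup
`C t = e^{-tMf}` on `H`, whose generator `-Mf` has domain exactly `D`. -/
def GeneratesContractionSemigroupOn (Mf : H → H) (D : Set H) : Prop :=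
  ∃ C : ℝ → H →L[ℂ] H,
    C 0 = ContinuousLinearMap.id ℂ H ∧
    (∀ s t : ℝ, 0 ≤ s → 0 ≤ t → C (s + t) = (C s).comp (C t)) ∧
    (∀ t : ℝ, 0 ≤ t → ‖C t‖ ≤ 1) ∧
    (∀ ψ : H, ContinuousOn (fun t : ℝ => C t ψ) (Ici 0)) ∧
    (∀ ψ : H, ψ ∈ D ↔
      ∃ η, Tendsto (fun t : ℝ => (t : ℂ)⁻¹ • (C t ψ - ψ)) (𝓝[>] 0) (𝓝 η)) ∧
    (∀ ψ ∈ D, Tendsto (fun t : ℝ => (t : ℂ)⁻¹ • (C t ψ - ψ)) (𝓝[>] 0) (𝓝 (-Mf ψ)))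

/-!
Write `|x⟩⟨y| - |x'⟩⟨y'| = |x - x'⟩⟨y| + |x'⟩⟨y - y'|`: every piece of either difference has
one factor of size at most `ε`, and the other factor is bounded by the data at `φ, ψ` up to an
extra `ε`. For `L₊` the pieces are summed over `k` by Cauchy–Schwarz, and the dissipation identity
gives `∑ ‖L_k χ‖² = 2 Re ⟪χ, Mχ⟫ ≤ 2 ‖χ‖ ‖Mχ‖ ≤ (‖χ‖ + ‖Mχ‖)² / 2`, so that
`∑ ‖L_k χ‖ ‖L_k ξ‖ ≤ (‖χ‖ + ‖Mχ‖) (‖ξ‖ + ‖Mξ‖) / 2`: the two pieces are then bounded by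
`ε (‖ψ‖ + ‖Mψ‖)` and `ε (‖e‖ + ‖Me‖) ≤ ε (‖φ‖ + ‖Mφ‖ + 2ε)`.
-/

theorem Real.summable_and_tsum_mul_le_sqrt_mul_sqrt {ι : Type*} {f g : ι → ℝ}
    (hf : ∀ i, 0 ≤ f i) (hg : ∀ i, 0 ≤ g i)
    (hf_sum : Summable fun i => f i ^ 2) (hg_sum : Summable fun i => g i ^ 2) :
    (Summable fun i => f i * g i) ∧
      ∑' i, f i * g i ≤ √(∑' i, f i ^ 2) * √(∑' i, g i ^ 2) := by
  simp_rw [Real.sqrt_eq_rpow, ← Real.rpow_two] at hf_sum hg_sum ⊢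
  exact Real.summable_and_inner_le_Lp_mul_Lq_tsum_of_nonneg .two_two hf hg hf_sum hg_sum

namespace TraceClassModel

variable {E F : Type*} [NormedAddCommGroup E] [InnerProductSpace ℂ E]
  [NormedAddCommGroup F] [NormedSpace ℂ F] (Mod : TraceClassModel E F)

theorem rankOne_sub_left (x x' y : E) :
    Mod.rankOne (x - x') y = Mod.rankOne x y - Mod.rankOne x' y :=
  Mod.toCLM_injective <| by ext z; simp [Mod.toCLM_rankOne, smul_sub]

theorem rankOne_sub_right (x y y' : E) :
    Mod.rankOne x (y - y') = Mod.rankOne x y - Mod.rankOne x y' :=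
  Mod.toCLM_injective <| by ext z; simp [Mod.toCLM_rankOne, sub_smul]

theorem norm_rankOne_sub_rankOne_le (x y x' y' : E) :
    ‖Mod.rankOne x y - Mod.rankOne x' y'‖ ≤ ‖x - x'‖ * ‖y‖ + ‖x'‖ * ‖y - y'‖ := by
  have hsplit : Mod.rankOne x y - Mod.rankOne x' y' =
      Mod.rankOne (x - x') y + Mod.rankOne x' (y - y') := by
    rw [rankOne_sub_left, rankOne_sub_right]
    abel
  rw [hsplit, ← Mod.norm_rankOne, ← Mod.norm_rankOne]
  exact norm_add_le _ _

theorem norm_rankOne_add_rankOne_sub_le {x a y b x' a' y' b' : E} {ε : ℝ}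
    (hx : ‖x - x'‖ ≤ ε) (ha : ‖a - a'‖ ≤ ε) (hy : ‖y - y'‖ ≤ ε) (hb : ‖b - b'‖ ≤ ε) :
    ‖(Mod.rankOne a y + Mod.rankOne x b) - (Mod.rankOne a' y' + Mod.rankOne x' b')‖
      ≤ ε * (‖x‖ + ‖a‖ + ‖y‖ + ‖b‖ + 2 * ε) := by
  have hε : 0 ≤ ε := (norm_nonneg _).trans hx
  have hx' : ‖x'‖ ≤ ‖x‖ + ε := (norm_le_norm_add_norm_sub x x').trans (by gcongr)
  have ha' : ‖a'‖ ≤ ‖a‖ + ε := (norm_le_norm_add_norm_sub a a').trans (by gcongr)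
  rw [add_sub_add_comm]
  calc _ ≤ ‖Mod.rankOne a y - Mod.rankOne a' y'‖ + ‖Mod.rankOne x b - Mod.rankOne x' b'‖ :=
        norm_add_le _ _
    _ ≤ (‖a - a'‖ * ‖y‖ + ‖a'‖ * ‖y - y'‖) + (‖x - x'‖ * ‖b‖ + ‖x'‖ * ‖b - b'‖) :=
        add_le_add (Mod.norm_rankOne_sub_rankOne_le _ _ _ _)
          (Mod.norm_rankOne_sub_rankOne_le _ _ _ _)
    _ ≤ (ε * ‖y‖ + (‖a‖ + ε) * ε) + (ε * ‖b‖ + (‖x‖ + ε) * ε) := by gcongr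
    _ = ε * (‖x‖ + ‖a‖ + ‖y‖ + ‖b‖ + 2 * ε) := by ring

end TraceClassModel

section Dissipation

variable {E : Type*} [NormedAddCommGroup E] [InnerProductSpace ℂ E] {ι : Type*}
  {M : E →ₗ.[ℂ] E} {L : ι → M.domain →ₗ[ℂ] E}

theorem tsum_norm_sq_le_of_eq_two_mul_re_inner
    (hL : ∀ φ : M.domain, ∑' k, ‖L k φ‖ ^ 2 = 2 * (⟪(φ : E), M φ⟫_ℂ).re) (φ : M.domain) :
    ∑' k, ‖L k φ‖ ^ 2 ≤ 2 * ‖(φ : E)‖ * ‖M φ‖ := by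
  rw [hL φ, mul_assoc]
  exact mul_le_mul_of_nonneg_left (re_inner_le_norm (𝕜 := ℂ) _ _) zero_le_two

theorem summable_and_tsum_norm_mul_norm_le_of_eq_two_mul_re_inner
    (hsum : ∀ φ : M.domain, Summable fun k => ‖L k φ‖ ^ 2)
    (hL : ∀ φ : M.domain, ∑' k, ‖L k φ‖ ^ 2 = 2 * (⟪(φ : E), M φ⟫_ℂ).re) (φ ψ : M.domain) :
    (Summable fun k => ‖L k φ‖ * ‖L k ψ‖) ∧
      ∑' k, ‖L k φ‖ * ‖L k ψ‖ ≤ (‖(φ : E)‖ + ‖M φ‖) * (‖(ψ : E)‖ + ‖M ψ‖) / 2 := by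
  obtain ⟨hsummable, hCS⟩ := Real.summable_and_tsum_mul_le_sqrt_mul_sqrt
    (fun k => norm_nonneg (L k φ)) (fun k => norm_nonneg (L k ψ)) (hsum φ) (hsum ψ)
  refine ⟨hsummable, hCS.trans ?_⟩
  have hsq : ∀ χ : M.domain, ∑' k, ‖L k χ‖ ^ 2 ≤ (‖(χ : E)‖ + ‖M χ‖) ^ 2 / 2 := fun χ =>
    (tsum_norm_sq_le_of_eq_two_mul_re_inner hL χ).trans
      (by nlinarith [sq_nonneg (‖(χ : E)‖ - ‖M χ‖)])
  rw [← Real.sqrt_mul (tsum_nonneg fun k => sq_nonneg _), Real.sqrt_le_left (by positivity)]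
  calc (∑' k, ‖L k φ‖ ^ 2) * ∑' k, ‖L k ψ‖ ^ 2
      ≤ (‖(φ : E)‖ + ‖M φ‖) ^ 2 / 2 * ((‖(ψ : E)‖ + ‖M ψ‖) ^ 2 / 2) :=
        mul_le_mul (hsq φ) (hsq ψ) (tsum_nonneg fun k => sq_nonneg _) (by positivity)
    _ = ((‖(φ : E)‖ + ‖M φ‖) * (‖(ψ : E)‖ + ‖M ψ‖) / 2) ^ 2 := by ring

variable {F : Type*} [NormedAddCommGroup F] [NormedSpace ℂ F] [CompleteSpace F]
  (Mod : TraceClassModel E F)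
  (hsum : ∀ φ : M.domain, Summable fun k => ‖L k φ‖ ^ 2)
  (hL : ∀ φ : M.domain, ∑' k, ‖L k φ‖ ^ 2 = 2 * (⟪(φ : E), M φ⟫_ℂ).re)
include hsum hL

theorem summable_rankOne_of_eq_two_mul_re_inner (φ ψ : M.domain) :
    Summable fun k => Mod.rankOne (L k φ) (L k ψ) :=
  .of_norm <| by
    simpa only [Mod.norm_rankOne] using
      (summable_and_tsum_norm_mul_norm_le_of_eq_two_mul_re_inner hsum hL φ ψ).1

theorem norm_tsum_rankOne_sub_tsum_rankOne_le {ε : ℝ} {φ ψ e f : M.domain}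
    (hφ : ‖(φ : E) - e‖ ≤ ε) (hMφ : ‖M φ - M e‖ ≤ ε)
    (hψ : ‖(ψ : E) - f‖ ≤ ε) (hMψ : ‖M ψ - M f‖ ≤ ε) :
    ‖(∑' k, Mod.rankOne (L k φ) (L k ψ)) - ∑' k, Mod.rankOne (L k e) (L k f)‖
      ≤ ε * (‖(φ : E)‖ + ‖M φ‖ + ‖(ψ : E)‖ + ‖M ψ‖ + 2 * ε) := by
  have hε : 0 ≤ ε := (norm_nonneg _).trans hφ
  have hφe : ‖((φ - e : M.domain) : E)‖ + ‖M (φ - e)‖ ≤ 2 * ε := by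
    rw [Submodule.coe_sub, M.map_sub]
    linarith
  have hψf : ‖((ψ - f : M.domain) : E)‖ + ‖M (ψ - f)‖ ≤ 2 * ε := by
    rw [Submodule.coe_sub, M.map_sub]
    linarith
  have he : ‖(e : E)‖ + ‖M e‖ ≤ ‖(φ : E)‖ + ‖M φ‖ + 2 * ε := by
    linarith [norm_le_norm_add_norm_sub (φ : E) e, norm_le_norm_add_norm_sub (M φ) (M e)]
  obtain ⟨hs₁, hS₁⟩ := summable_and_tsum_norm_mul_norm_le_of_eq_two_mul_re_inner hsum hL (φ - e) ψ
  obtain ⟨hs₂, hS₂⟩ := summable_and_tsum_norm_mul_norm_le_of_eq_two_mul_re_inner hsum hL e (ψ - f)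
  rw [← (summable_rankOne_of_eq_two_mul_re_inner Mod hsum hL φ ψ).tsum_sub
    (summable_rankOne_of_eq_two_mul_re_inner Mod hsum hL e f)]
  refine (tsum_of_norm_bounded (hs₁.hasSum.add hs₂.hasSum) fun k => ?_).trans ?_
  · rw [map_sub, map_sub]
    exact Mod.norm_rankOne_sub_rankOne_le _ _ _ _
  calc _ ≤ 2 * ε * (‖(ψ : E)‖ + ‖M ψ‖) / 2 + (‖(φ : E)‖ + ‖M φ‖ + 2 * ε) * (2 * ε) / 2 := by
        gcongr
        · exact hS₁.trans (by gcongr)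
        · exact hS₂.trans (by gcongr)
    _ = ε * (‖(φ : E)‖ + ‖M φ‖ + ‖(ψ : E)‖ + ‖M ψ‖ + 2 * ε) := by ring

end Dissipation

theorem expander_graph_approx_general
    (M : H →ₗ.[ℂ] H) (Lk : ℕ → M.domain →ₗ[ℂ] H)
    (hsum : ∀ φ : M.domain, Summable fun k => ‖Lk k φ‖ ^ 2)
    (hnormsq : ∀ φ : M.domain, ∑' k, ‖Lk k φ‖ ^ 2 = 2 * (⟪(φ : H), M φ⟫_ℂ).re)
    (ε : ℝ) (φ ψ ee ff : M.domain)
    (h1 : ‖(φ : H) - (ee : H)‖ ≤ ε) (h2 : ‖M φ - M ee‖ ≤ ε)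
    (h3 : ‖(ψ : H) - (ff : H)‖ ≤ ε) (h4 : ‖M ψ - M ff‖ ≤ ε) :
    ‖(Mod.rankOne (M φ) (ψ : H) + Mod.rankOne (φ : H) (M ψ))
        - (Mod.rankOne (M ee) (ff : H) + Mod.rankOne (ee : H) (M ff))‖
      ≤ ε * (‖(φ : H)‖ + ‖M φ‖ + ‖(ψ : H)‖ + ‖M ψ‖ + 2 * ε) ∧
    (Summable fun k => Mod.rankOne (Lk k φ) (Lk k ψ)) ∧
    (Summable fun k => Mod.rankOne (Lk k ee) (Lk k ff)) ∧
    ‖(∑' k, Mod.rankOne (Lk k φ) (Lk k ψ)) - ∑' k, Mod.rankOne (Lk k ee) (Lk k ff)‖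
      ≤ ε * (‖(φ : H)‖ + ‖M φ‖ + ‖(ψ : H)‖ + ‖M ψ‖ + 2 * ε) :=
  ⟨Mod.norm_rankOne_add_rankOne_sub_le h1 h2 h3 h4,
    summable_rankOne_of_eq_two_mul_re_inner Mod hsum hnormsq φ ψ,
    summable_rankOne_of_eq_two_mul_re_inner Mod hsum hnormsq ee ff,
    norm_tsum_rankOne_sub_tsum_rankOne_le Mod hsum hnormsq h1 h2 h3 h4⟩

/-- Lemma 3, approximation in graph norm: with
`∑_k ‖L_k φ‖² = 2 Re⟨φ, Mφ⟩` on `D(M)`, if the pairs `(φ, ψ)` and `(e, f)` in `D(M)` are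
`ε`-close in the graph of `M`, then both
`‖M(|φ⟩⟨ψ|) − M(|e⟩⟨f|)‖₁` and `‖L₊(|φ⟩⟨ψ|) − L₊(|e⟩⟨f|)‖₁` are bounded by
`ε·(‖φ‖ + ‖Mφ‖ + ‖ψ‖ + ‖Mψ‖ + 2ε)`. -/
theorem expander_graph_approx [TopologicalSpace.SeparableSpace H]
    (M : H →ₗ.[ℂ] H) (Lk : ℕ → M.domain →ₗ[ℂ] H)
    (hsum : ∀ φ : M.domain, Summable fun k => ‖Lk k φ‖ ^ 2)
    (hnormsq : ∀ φ : M.domain, ∑' k, ‖Lk k φ‖ ^ 2 = 2 * (⟪(φ : H), M φ⟫_ℂ).re)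
    (ε : ℝ) (hε : 0 < ε) (φ ψ ee ff : M.domain)
    (h1 : ‖(φ : H) - (ee : H)‖ ≤ ε) (h2 : ‖M φ - M ee‖ ≤ ε)
    (h3 : ‖(ψ : H) - (ff : H)‖ ≤ ε) (h4 : ‖M ψ - M ff‖ ≤ ε) :
    ‖(Mod.rankOne (M φ) (ψ : H) + Mod.rankOne (φ : H) (M ψ))
        - (Mod.rankOne (M ee) (ff : H) + Mod.rankOne (ee : H) (M ff))‖
      ≤ ε * (‖(φ : H)‖ + ‖M φ‖ + ‖(ψ : H)‖ + ‖M ψ‖ + 2 * ε) ∧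
    (Summable fun k => Mod.rankOne (Lk k φ) (Lk k ψ)) ∧
    (Summable fun k => Mod.rankOne (Lk k ee) (Lk k ff)) ∧
    ‖(∑' k, Mod.rankOne (Lk k φ) (Lk k ψ)) - ∑' k, Mod.rankOne (Lk k ee) (Lk k ff)‖
      ≤ ε * (‖(φ : H)‖ + ‖M φ‖ + ‖(ψ : H)‖ + ‖M ψ‖ + 2 * ε) :=
  expander_graph_approx_general M Lk hsum hnormsq ε φ ψ ee ff h1 h2 h3 h4
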